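/- Under the same hypotheses (detailed balance equilibrium r, γ = max_i Σ_j C_{ij}, normalized coefficients), for every edge i ~ j: γ^{-2-2δ} ≤ C_{ij} C_{ji} / (r_i^δ R_i r_j^δ R_j) ≤ 1, i.e., the matrix entries ℓ_{ij} = sqrt(C_{ij}C_{ji}/(R_i r_i^δ R_j r_j^δ)) satisfy γ^{-1-δ} ≤ ℓ_{ij} ≤ 1 on edges. -/

import Mathlib

/-!
Write `g i = r i ^ δ * R i = ∑ k, C i k * (r i / r k) ^ δ`. Detailed balance together with
`C k i ≤ R k * r i ^ δ` gives `(r i / r k) ^ (1 + δ) ≤ g i` along every edge, since normalized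
nonzero entries are at least `1`. Feeding this back into the sum, with `u = g i ^ (1 + δ)⁻¹`,
gives `u * u ^ δ = g i ≤ γ * u ^ δ`, hence `g i ≤ γ ^ (1 + δ)`. On an edge `1 ≤ C i j * C j i`,
while `C i j * C j i ≤ g i * g j` term by term, which yields both bounds.
-/

open Finset

/-- `l` is a walk in the support graph of `C`. -/
def isWalk {n : ℕ} (C : Matrix (Fin n) (Fin n) ℝ) (l : List (Fin n)) : Prop :=
  l.Chain' fun a b => 0 < C a b

section DetailedBalance

variable {ι : Type*} [Fintype ι] {C : ι → ι → ℝ} {r R : ι → ℝ} {δ : ℝ}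

theorem entry_le_mul_rpow (hC : ∀ i j, 0 ≤ C i j) (hr : ∀ i, 0 < r i)
    (hR : ∀ i, R i = ∑ k, C i k / r k ^ δ) (i j : ι) : C i j ≤ R i * r j ^ δ := by
  have hterm : C i j / r j ^ δ ≤ R i := hR i ▸
    single_le_sum (fun k _ => div_nonneg (hC i k) (Real.rpow_nonneg (hr k).le δ)) (mem_univ j)
  exact (div_le_iff₀ (Real.rpow_pos_of_pos (hr j) δ)).1 hterm

theorem pos_of_eq_sum_div_rpow (hC : ∀ i j, 0 ≤ C i j) (hr : ∀ i, 0 < r i)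
    (hR : ∀ i, R i = ∑ k, C i k / r k ^ δ) {i j : ι} (hij : 0 < C i j) : 0 < R i :=
  hR i ▸ sum_pos' (fun k _ => div_nonneg (hC i k) (Real.rpow_nonneg (hr k).le δ))
    ⟨j, mem_univ j, div_pos hij (Real.rpow_pos_of_pos (hr j) δ)⟩

theorem rpow_mul_eq_sum (hr : ∀ i, 0 < r i) (hR : ∀ i, R i = ∑ k, C i k / r k ^ δ) (i : ι) :
    r i ^ δ * R i = ∑ k, C i k * (r i / r k) ^ δ := by
  rw [hR i, mul_sum]
  refine sum_congr rfl fun k _ => ?_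
  rw [Real.div_rpow (hr i).le (hr k).le]
  ring

theorem rpow_mul_entry_le (hC : ∀ i j, 0 ≤ C i j) (hr : ∀ i, 0 < r i)
    (hR : ∀ i, R i = ∑ k, C i k / r k ^ δ) (hRpos : ∀ i, 0 < R i)
    (hdb : ∀ i j, r i ^ (1 + δ) * C i j / R i = r j ^ (1 + δ) * C j i / R j) (i k : ι) :
    r i ^ (1 + δ) * C i k ≤ r k ^ (1 + δ) * (r i ^ δ * R i) := by
  have hki : C k i / R k ≤ r i ^ δ :=
    (div_le_iff₀ (hRpos k)).2 (by linarith [entry_le_mul_rpow hC hr hR k i])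
  calc r i ^ (1 + δ) * C i k = R i * (r k ^ (1 + δ) * (C k i / R k)) := by
        rw [← mul_div_assoc, ← hdb, mul_div_cancel₀ _ (hRpos i).ne']
    _ ≤ R i * (r k ^ (1 + δ) * r i ^ δ) := by
        gcongr
        exacts [(hRpos i).le, (Real.rpow_pos_of_pos (hr k) _).le]
    _ = r k ^ (1 + δ) * (r i ^ δ * R i) := by ring

theorem div_le_rpow_inv_of_detailedBalance (hC : ∀ i j, 0 ≤ C i j) (hr : ∀ i, 0 < r i)
    (hR : ∀ i, R i = ∑ k, C i k / r k ^ δ) (hRpos : ∀ i, 0 < R i)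
    (hdb : ∀ i j, r i ^ (1 + δ) * C i j / R i = r j ^ (1 + δ) * C j i / R j) (hδ : 0 ≤ δ)
    {i k : ι} (hik : 1 ≤ C i k) : r i / r k ≤ (r i ^ δ * R i) ^ (1 + δ)⁻¹ := by
  have h1δ : 0 < 1 + δ := by linarith
  have hg : 0 ≤ r i ^ δ * R i := (mul_pos (Real.rpow_pos_of_pos (hr i) δ) (hRpos i)).le
  have hrk : 0 < r k ^ (1 + δ) := Real.rpow_pos_of_pos (hr k) _
  have hratio : (r i / r k) ^ (1 + δ) ≤ r i ^ δ * R i := by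
    rw [Real.div_rpow (hr i).le (hr k).le, div_le_iff₀ hrk, mul_comm _ (r k ^ (1 + δ))]
    calc r i ^ (1 + δ) ≤ r i ^ (1 + δ) * C i k :=
          le_mul_of_one_le_right (Real.rpow_pos_of_pos (hr i) _).le hik
      _ ≤ _ := rpow_mul_entry_le hC hr hR hRpos hdb i k
  rwa [← Real.rpow_le_rpow_iff (div_pos (hr i) (hr k)).le (Real.rpow_nonneg hg _) h1δ,
    Real.rpow_inv_rpow hg h1δ.ne']

theorem rpow_mul_le_rpow_of_detailedBalance (hC : ∀ i j, 0 ≤ C i j) (hr : ∀ i, 0 < r i)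
    (hR : ∀ i, R i = ∑ k, C i k / r k ^ δ) (hRpos : ∀ i, 0 < R i)
    (hdb : ∀ i j, r i ^ (1 + δ) * C i j / R i = r j ^ (1 + δ) * C j i / R j) (hδ : 0 ≤ δ)
    (hnorm : ∀ i j, C i j ≠ 0 → 1 ≤ C i j) {γ : ℝ} (hrow : ∀ i, ∑ k, C i k ≤ γ) (i : ι) :
    r i ^ δ * R i ≤ γ ^ (1 + δ) := by
  have h1δ : 0 < 1 + δ := by linarith
  set g := r i ^ δ * R i
  have hg : 0 < g := mul_pos (Real.rpow_pos_of_pos (hr i) δ) (hRpos i)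
  set u := g ^ (1 + δ)⁻¹
  have hu : 0 < u := Real.rpow_pos_of_pos hg _
  have hgu : g = u * u ^ δ := by
    rw [← Real.rpow_one_add' hu.le (by linarith), Real.rpow_inv_rpow hg.le h1δ.ne']
  have hterm : ∀ k, C i k * (r i / r k) ^ δ ≤ C i k * u ^ δ := fun k => by
    rcases eq_or_ne (C i k) 0 with h0 | h0
    · simp [h0]
    · gcongr
      · exact hC i k
      · exact (div_pos (hr i) (hr k)).le
      · exact div_le_rpow_inv_of_detailedBalance hC hr hR hRpos hdb hδ (hnorm i k h0)
  have hmul : u * u ^ δ ≤ γ * u ^ δ :=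
    calc u * u ^ δ = ∑ k, C i k * (r i / r k) ^ δ := hgu.symm.trans (rpow_mul_eq_sum hr hR i)
      _ ≤ (∑ k, C i k) * u ^ δ := (sum_le_sum fun k _ => hterm k).trans_eq (sum_mul _ _ _).symm
      _ ≤ γ * u ^ δ := by gcongr; exact hrow i
  have huγ : u ≤ γ := le_of_mul_le_mul_right hmul (Real.rpow_pos_of_pos hu δ)
  calc g = u ^ (1 + δ) := (Real.rpow_inv_rpow hg.le h1δ.ne').symm
    _ ≤ γ ^ (1 + δ) := Real.rpow_le_rpow hu.le huγ h1δ.le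

theorem edge_ratio_bounds (hC : ∀ i j, 0 ≤ C i j) (hr : ∀ i, 0 < r i)
    (hR : ∀ i, R i = ∑ k, C i k / r k ^ δ) (hRpos : ∀ i, 0 < R i)
    (hdb : ∀ i j, r i ^ (1 + δ) * C i j / R i = r j ^ (1 + δ) * C j i / R j) (hδ : 0 ≤ δ)
    (hnorm : ∀ i j, C i j ≠ 0 → 1 ≤ C i j) {γ : ℝ} (hrow : ∀ i, ∑ k, C i k ≤ γ)
    {i j : ι} (hij : C i j ≠ 0) (hji : C j i ≠ 0) :
    ((γ ^ (1 + δ))⁻¹) ^ 2 ≤ C i j * C j i / (r i ^ δ * R i * (r j ^ δ * R j)) ∧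
      C i j * C j i / (r i ^ δ * R i * (r j ^ δ * R j)) ≤ 1 := by
  have hgi := rpow_mul_le_rpow_of_detailedBalance hC hr hR hRpos hdb hδ hnorm hrow i
  have hgj := rpow_mul_le_rpow_of_detailedBalance hC hr hR hRpos hdb hδ hnorm hrow j
  have hgi0 : 0 < r i ^ δ * R i := mul_pos (Real.rpow_pos_of_pos (hr i) δ) (hRpos i)
  have hgj0 : 0 < r j ^ δ * R j := mul_pos (Real.rpow_pos_of_pos (hr j) δ) (hRpos j)
  have hnum : 1 ≤ C i j * C j i := one_le_mul_of_one_le_of_one_le (hnorm i j hij) (hnorm j i hji)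
  have hnum_le : C i j * C j i ≤ r i ^ δ * R i * (r j ^ δ * R j) := by
    calc C i j * C j i ≤ (R i * r j ^ δ) * (R j * r i ^ δ) :=
          mul_le_mul (entry_le_mul_rpow hC hr hR i j) (entry_le_mul_rpow hC hr hR j i) (hC j i)
            (mul_pos (hRpos i) (Real.rpow_pos_of_pos (hr j) δ)).le
      _ = r i ^ δ * R i * (r j ^ δ * R j) := by ring
  refine ⟨?_, (div_le_one (mul_pos hgi0 hgj0)).2 hnum_le⟩
  calc ((γ ^ (1 + δ))⁻¹) ^ 2 = 1 / (γ ^ (1 + δ) * γ ^ (1 + δ)) := by rw [inv_pow, sq, one_div]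
    _ ≤ C i j * C j i / (r i ^ δ * R i * (r j ^ δ * R j)) :=
        div_le_div₀ (zero_le_one.trans hnum) hnum (mul_pos hgi0 hgj0)
          (mul_le_mul hgi hgj hgj0.le (hgi0.le.trans hgi))

end DetailedBalance

theorem ell_entry_bounds {n : ℕ} (hn : 2 ≤ n)
    (C : Matrix (Fin n) (Fin n) ℝ) (δ : ℝ) (hδ : 0 < δ)
    (hCnn : ∀ i j, 0 ≤ C i j)
    (hCsupp : ∀ i j, 0 < C i j ↔ 0 < C j i)
    -- row-minimum normalization: nonzero entries are ≥ 1 and some entry equals 1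
    (hnorm : ∀ i, (∀ j, C i j ≠ 0 → 1 ≤ C i j) ∧ ∃ j, C i j = 1)
    (r : Fin n → ℝ) (hr : ∀ i, 0 < r i)
    (R : Fin n → ℝ) (hR : ∀ i, R i = ∑ k, C i k / r k ^ δ)
    -- detailed balance
    (hdb : ∀ i j, r i ^ (1 + δ) * C i j / R i = r j ^ (1 + δ) * C j i / R j)
    (γ : ℝ)
    (hγ : γ = Finset.univ.sup' ⟨(⟨0, by omega⟩ : Fin n), Finset.mem_univ _⟩ fun i => ∑ j, C i j) :
    ∀ i j, 0 < C i j →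
      (γ ^ (-2 - 2 * δ) ≤ C i j * C j i / (r i ^ δ * R i * (r j ^ δ * R j)) ∧
        C i j * C j i / (r i ^ δ * R i * (r j ^ δ * R j)) ≤ 1) ∧
      (γ ^ (-1 - δ) ≤ Real.sqrt (C i j * C j i / (R i * r i ^ δ * (R j * r j ^ δ))) ∧
        Real.sqrt (C i j * C j i / (R i * r i ^ δ * (R j * r j ^ δ))) ≤ 1) := by
  intro i j hij
  have hrow : ∀ i, ∑ k, C i k ≤ γ := fun i => hγ ▸ le_sup' (fun i => ∑ k, C i k) (mem_univ i)
  have hγ0 : 0 ≤ γ := (sum_nonneg fun k _ => hCnn i k).trans (hrow i)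
  have hRpos : ∀ i, 0 < R i := fun i => by
    obtain ⟨k, hk⟩ := (hnorm i).2
    exact pos_of_eq_sum_div_rpow hCnn hr hR (hk ▸ one_pos : 0 < C i k)
  have hbounds := edge_ratio_bounds hCnn hr hR hRpos hdb hδ.le (fun i => (hnorm i).1) hrow
    hij.ne' ((hCsupp i j).1 hij).ne'
  have hinv : γ ^ (-1 - δ) = (γ ^ (1 + δ))⁻¹ := by
    rw [show -1 - δ = -(1 + δ) by ring, Real.rpow_neg hγ0]
  have hinv_sq : γ ^ (-2 - 2 * δ) = ((γ ^ (1 + δ))⁻¹) ^ 2 := by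
    rw [← hinv, ← Real.rpow_natCast, ← Real.rpow_mul hγ0]
    ring_nf
  rw [show R i * r i ^ δ * (R j * r j ^ δ) = r i ^ δ * R i * (r j ^ δ * R j) by ring,
    hinv_sq, hinv]
  exact ⟨hbounds, (Real.le_sqrt (by positivity) ((sq_nonneg _).trans hbounds.1)).2 hbounds.1,
    Real.sqrt_le_one.2 hbounds.2⟩
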